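/- arXiv:math/0204015 — 2 statements merged into one kernel-verified Lean document; each statement's English description precedes it below -/
import Mathlib

section
/- Let k be a field of characteristic 0 and let φ : k[a, b, c, d, e, f] → k[x₀, x₁, x₂] be the k-algebra homomorphism determined by a ↦ x₁³, b ↦ x₂³ − x₀²x₂, c ↦ x₀x₁², d ↦ x₁²x₂, e ↦ x₁x₂², f ↦ x₀x₁x₂. Then the kernel of φ is exactly the ideal generated by the five quadrics c·e − d·f, d² − a·e, c·d − a·f, b·d − e² + f², and a·b − d·e + c·f. -/
/-!
Weight `a, …, f` by `1, 11, 5, 4, 6, 2`. Then `ce, d², cd, bd, ab` are the heaviest terms of the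
five quadrics, so modulo the quadrics every polynomial reduces to a combination of standard
monomials, those divisible by none of these five. Conversely, for the lex order with
`x₀ > x₁ > x₂` the leading monomials of the images of the standard monomials are pairwise
distinct, so `φ` is injective on their span. Hence the quadrics generate the kernel.
-/

open MvPolynomial

/-- The map `φ : k[a,b,c,d,e,f] → k[x₀,x₁,x₂]` sending the six variables to the six cubics
`x₁³, x₂³ − x₀²x₂, x₀x₁², x₁²x₂, x₁x₂², x₀x₁x₂`. -/
noncomputable abbrev Stmt5.phi (k : Type*) [Field k] :
    MvPolynomial (Fin 6) k →ₐ[k] MvPolynomial (Fin 3) k :=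
  aeval ![X 1 ^ 3, X 2 ^ 3 - X 0 ^ 2 * X 2, X 0 * X 1 ^ 2, X 1 ^ 2 * X 2,
    X 1 * X 2 ^ 2, X 0 * X 1 * X 2]

open Finsupp MonomialOrder

namespace MvPolynomial

variable {σ τ R : Type*}

theorem restrictScalars_sup_restrictSupport_eq_top [CommRing R] (w : σ → ℕ)
    (J : Ideal (MvPolynomial σ R)) (S : Set (σ →₀ ℕ))
    (hS : ∀ u ∉ S, ∃ L ≤ u, ∃ t ∈ restrictSupport R {m | weight w m < weight w L},
      monomial L 1 - t ∈ J) :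
    J.restrictScalars R ⊔ restrictSupport R S = ⊤ := by
  set M := J.restrictScalars R ⊔ restrictSupport R S
  have monomial_mem : ∀ n u, weight w u = n → ∀ c : R, monomial u c ∈ M := by
    intro n
    induction n using Nat.strong_induction_on with
    | _ n ih =>
      rintro u rfl c
      by_cases huS : u ∈ S
      · exact Submodule.mem_sup_right ((monomial_mem_restrictSupport R).2 (Or.inl huS))
      obtain ⟨L, hLu, t, ht, htJ⟩ := hS u huS
      have hsplit : monomial u c =
          monomial (u - L) c * (monomial L 1 - t) + monomial (u - L) c * t := by
        rw [mul_sub, sub_add_cancel, monomial_mul, mul_one, tsub_add_cancel_of_le hLu]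
      rw [hsplit]
      refine M.add_mem (Submodule.mem_sup_left (J.mul_mem_left _ htJ)) ?_
      rw [t.as_sum, Finset.mul_sum]
      refine M.sum_mem fun m hm => ?_
      rw [monomial_mul]
      refine ih _ ?_ _ rfl _
      have hm : weight w m < weight w L := ht hm
      have hL := congrArg (weight w) (tsub_add_cancel_of_le hLu)
      rw [map_add] at hL ⊢
      omega
  refine eq_top_iff.2 fun p _ => ?_
  rw [p.as_sum]
  exact M.sum_mem fun u _ => monomial_mem _ u rfl _

theorem map_monomial_one_eq_prod [CommSemiring R]
    (f : MvPolynomial σ R →ₐ[R] MvPolynomial τ R) (u : σ →₀ ℕ) :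
    f (monomial u 1) = ∏ i ∈ u.support, f (X i) ^ u i := by
  rw [monomial_eq, C_1, one_mul, Finsupp.prod, map_prod]
  simp only [map_pow]

theorem map_monomial_one_ne_zero [CommRing R] [IsDomain R]
    (f : MvPolynomial σ R →ₐ[R] MvPolynomial τ R) (hf : ∀ i, f (X i) ≠ 0)
    (u : σ →₀ ℕ) : f (monomial u 1) ≠ 0 := by
  rw [map_monomial_one_eq_prod]
  exact Finset.prod_ne_zero_iff.2 fun i _ => pow_ne_zero _ (hf i)

end MvPolynomial

namespace MonomialOrder

variable {σ τ R : Type*} [CommRing R] [IsDomain R] (m : MonomialOrder τ)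

theorem degree_map_monomial_one (f : MvPolynomial σ R →ₐ[R] MvPolynomial τ R)
    (hf : ∀ i, f (X i) ≠ 0) (u : σ →₀ ℕ) :
    m.degree (f (monomial u 1)) = u.sum fun i n => n • m.degree (f (X i)) := by
  rw [map_monomial_one_eq_prod, m.degree_prod fun i _ => pow_ne_zero _ (hf i)]
  simp only [m.degree_pow]
  rfl

theorem disjoint_ker_restrictSupport (f : MvPolynomial σ R →ₗ[R] MvPolynomial τ R)
    {S : Set (σ →₀ ℕ)} (hf : ∀ u ∈ S, f (monomial u 1) ≠ 0)
    (hinj : S.InjOn fun u => m.degree (f (monomial u 1))) :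
    Disjoint (LinearMap.ker f) (restrictSupport R S) := by
  rw [Submodule.disjoint_def]
  intro r hr hrS
  by_contra h0
  obtain ⟨u₀, hu₀, hmax⟩ := r.support.exists_max_image
    (fun u => m.toSyn (m.degree (f (monomial u 1)))) (support_nonempty.2 h0)
  have hf_monomial : ∀ u, f (monomial u (coeff u r)) = coeff u r • f (monomial u 1) := by
    intro u
    rw [← map_smul, smul_monomial, smul_eq_mul, mul_one]
  have hcoeff : coeff (m.degree (f (monomial u₀ 1))) (f r) =
      coeff u₀ r * m.leadingCoeff (f (monomial u₀ 1)) := by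
    conv_lhs => rw [r.as_sum]
    rw [map_sum, coeff_sum, Finset.sum_eq_single u₀]
    · rw [hf_monomial, coeff_smul, smul_eq_mul, leadingCoeff]
    · intro u hu hne
      rw [hf_monomial, coeff_smul, m.coeff_eq_zero_of_lt, smul_zero]
      exact lt_of_le_of_ne (hmax u hu)
        fun h => hne (hinj (hrS hu) (hrS hu₀) (m.toSyn.injective h))
    · exact fun h => absurd hu₀ h
  rw [LinearMap.mem_ker.1 hr, coeff_zero] at hcoeff
  exact mul_ne_zero (MvPolynomial.mem_support_iff.1 hu₀)
    (m.leadingCoeff_ne_zero_iff.2 (hf u₀ (hrS hu₀))) hcoeff.symm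

end MonomialOrder

namespace Stmt5

variable {k : Type*} [Field k]

noncomputable def quadricIdeal (k : Type*) [Field k] : Ideal (MvPolynomial (Fin 6) k) :=
  Ideal.span {X 2 * X 4 - X 3 * X 5,
    X 3 ^ 2 - X 0 * X 4,
    X 2 * X 3 - X 0 * X 5,
    X 1 * X 3 - X 4 ^ 2 + X 5 ^ 2,
    X 0 * X 1 - X 3 * X 4 + X 2 * X 5}

theorem quadricIdeal_le_ker : quadricIdeal k ≤ RingHom.ker (phi k).toRingHom := by
  refine Ideal.span_le.2 fun g hg => ?_
  simp only [Set.mem_insert_iff, Set.mem_singleton_iff] at hg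
  rcases hg with rfl | rfl | rfl | rfl | rfl <;>
    simp only [SetLike.mem_coe, RingHom.mem_ker, AlgHom.toRingHom_eq_coe, RingHom.coe_coe,
      map_add, map_sub, map_mul, map_pow, aeval_X, Matrix.cons_val] <;>
    ring

/-- The monomials divisible by none of `ce, d², cd, bd, ab`, i.e. those of the shapes
`aᵅcᵞfᶿ`, `aᵅdᵟeᵋfᶿ` with `δ ≤ 1`, `bᵝcᵞfᶿ` and `bᵝeᵋfᶿ`. -/
def IsStandard (u : Fin 6 →₀ ℕ) : Prop :=
  (u 1 = 0 ∧ u 3 = 0 ∧ u 4 = 0) ∨ (u 1 = 0 ∧ u 2 = 0 ∧ u 3 ≤ 1) ∨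
    (u 0 = 0 ∧ u 3 = 0 ∧ u 4 = 0) ∨ (u 0 = 0 ∧ u 2 = 0 ∧ u 3 = 0)

def quadricWeight : Fin 6 → ℕ := ![1, 11, 5, 4, 6, 2]

theorem X_mul_X_mem_restrictSupport {i j : Fin 6} {n : ℕ}
    (h : quadricWeight i + quadricWeight j < n) :
    (X i * X j : MvPolynomial (Fin 6) k) ∈
      restrictSupport k {m | weight quadricWeight m < n} := by
  rw [X, X, monomial_mul, one_mul, monomial_mem_restrictSupport]
  left
  simpa [weight_single] using h

theorem exists_reduction_of_X_mul_X_sub_mem {u : Fin 6 →₀ ℕ} {i j : Fin 6}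
    (hij : single i 1 + single j 1 ≤ u) {t : MvPolynomial (Fin 6) k}
    (ht : t ∈ restrictSupport k {m | weight quadricWeight m < quadricWeight i + quadricWeight j})
    (hJ : X i * X j - t ∈ quadricIdeal k) :
    ∃ L ≤ u, ∃ t ∈ restrictSupport k {m | weight quadricWeight m < weight quadricWeight L},
      monomial L 1 - t ∈ quadricIdeal k :=
  ⟨_, hij, t, by simpa [weight_single] using ht, by rwa [X, X, monomial_mul, one_mul] at hJ⟩

theorem exists_reduction_of_not_isStandard {u : Fin 6 →₀ ℕ} (hu : ¬ IsStandard u) :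
    ∃ L ≤ u, ∃ t ∈ restrictSupport k {m | weight quadricWeight m < weight quadricWeight L},
      monomial L 1 - t ∈ quadricIdeal k := by
  have hlead : single 2 1 + single 4 1 ≤ u ∨ single 3 1 + single 3 1 ≤ u ∨
      single 2 1 + single 3 1 ≤ u ∨ single 1 1 + single 3 1 ≤ u ∨
      single 0 1 + single 1 1 ≤ u := by
    unfold IsStandard at hu
    simp only [Finsupp.le_def, Fin.forall_fin_succ, IsEmpty.forall_iff, Finsupp.coe_add,
      Pi.add_apply, single_apply, Fin.succ_zero_eq_one, Fin.succ_one_eq_two, Fin.reduceSucc,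
      Fin.reduceEq, ↓reduceIte, and_true]
    omega
  rcases hlead with h | h | h | h | h
  · exact exists_reduction_of_X_mul_X_sub_mem (t := X 3 * X 5) h
      (X_mul_X_mem_restrictSupport (by decide)) (Ideal.subset_span (by simp))
  · refine exists_reduction_of_X_mul_X_sub_mem (t := X 0 * X 4) h
      (X_mul_X_mem_restrictSupport (by decide)) ?_
    rw [← sq]
    exact Ideal.subset_span (by simp)
  · exact exists_reduction_of_X_mul_X_sub_mem (t := X 0 * X 5) h
      (X_mul_X_mem_restrictSupport (by decide)) (Ideal.subset_span (by simp))
  · refine exists_reduction_of_X_mul_X_sub_mem (t := X 4 * X 4 - X 5 * X 5) h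
      (sub_mem (X_mul_X_mem_restrictSupport (by decide))
        (X_mul_X_mem_restrictSupport (by decide))) ?_
    rw [← sq, ← sq, ← sub_add]
    exact Ideal.subset_span (by simp)
  · refine exists_reduction_of_X_mul_X_sub_mem (t := X 3 * X 4 - X 2 * X 5) h
      (sub_mem (X_mul_X_mem_restrictSupport (by decide))
        (X_mul_X_mem_restrictSupport (by decide))) ?_
    rw [← sub_add]
    exact Ideal.subset_span (by simp)

theorem lex_degree_X_two_pow_three_sub :
    lex.degree (X 2 ^ 3 - X 0 ^ 2 * X 2 : MvPolynomial (Fin 3) k) = single 0 2 + single 2 1 := by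
  rw [← neg_sub, degree_neg, degree_sub_of_lt] <;>
    simp only [degree_mul (pow_ne_zero _ (X_ne_zero _)) (X_ne_zero _), degree_pow, degree_X,
      lex_lt_iff, Finsupp.Lex.lt_iff]
  · simp
  · exact ⟨0, by simp, by simp⟩

theorem lex_degree_phi_X (i : Fin 6) : lex.degree (phi k (X i)) =
    ![single 1 3, single 0 2 + single 2 1, single 0 1 + single 1 2, single 1 2 + single 2 1,
      single 1 1 + single 2 2, single 0 1 + single 1 1 + single 2 1] i := by
  fin_cases i <;>
    simp [Matrix.cons_val, degree_mul, degree_pow, degree_X, X_ne_zero,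
      lex_degree_X_two_pow_three_sub]

theorem phi_X_ne_zero (i : Fin 6) : phi k (X i) ≠ 0 :=
  ne_zero_of_degree_ne_zero (m := lex) (by rw [lex_degree_phi_X]; fin_cases i <;> simp)

theorem injOn_lex_degree_phi :
    {u | IsStandard u}.InjOn fun u => lex.degree (phi k (monomial u 1)) := by
  intro u (hu : IsStandard u) v (hv : IsStandard v) h
  simp only [degree_map_monomial_one _ _ phi_X_ne_zero, lex_degree_phi_X] at h
  rw [Finsupp.sum_fintype _ _ (by simp), Finsupp.sum_fintype _ _ (by simp)] at h
  have h0 := congrArg (· 0) h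
  have h1 := congrArg (· 1) h
  have h2 := congrArg (· 2) h
  simp only [Fin.sum_univ_six, Matrix.cons_val, Finsupp.coe_add, Finsupp.smul_apply,
    Pi.add_apply, single_apply, Fin.reduceEq, ↓reduceIte, smul_eq_mul] at h0 h1 h2
  have : u 0 = v 0 ∧ u 1 = v 1 ∧ u 2 = v 2 ∧ u 3 = v 3 ∧ u 4 = v 4 ∧ u 5 = v 5 := by
    unfold IsStandard at hu hv
    omega
  ext i
  fin_cases i <;> simp [this]

theorem quadricIdeal_sup_restrictSupport_eq_top :
    (quadricIdeal k).restrictScalars k ⊔ restrictSupport k {u | IsStandard u} = ⊤ :=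
  restrictScalars_sup_restrictSupport_eq_top quadricWeight _ _
    fun _ hu => exists_reduction_of_not_isStandard hu

theorem disjoint_ker_phi_restrictSupport :
    Disjoint (LinearMap.ker (phi k).toLinearMap) (restrictSupport k {u | IsStandard u}) :=
  lex.disjoint_ker_restrictSupport _ (fun u _ => map_monomial_one_ne_zero _ phi_X_ne_zero u)
    injOn_lex_degree_phi

end Stmt5

theorem stmt5_general (k : Type*) [Field k] :
    RingHom.ker (Stmt5.phi k).toRingHom =
      Ideal.span {X 2 * X 4 - X 3 * X 5,
        X 3 ^ 2 - X 0 * X 4,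
        X 2 * X 3 - X 0 * X 5,
        X 1 * X 3 - X 4 ^ 2 + X 5 ^ 2,
        X 0 * X 1 - X 3 * X 4 + X 2 * X 5} := by
  refine le_antisymm (fun p hp => ?_) Stmt5.quadricIdeal_le_ker
  obtain ⟨y, hy, z, hz, rfl⟩ := Submodule.mem_sup.1
    (Stmt5.quadricIdeal_sup_restrictSupport_eq_top.ge (Submodule.mem_top (x := p)))
  have hz_ker : Stmt5.phi k z = 0 := by
    rwa [RingHom.mem_ker, map_add, Stmt5.quadricIdeal_le_ker hy, zero_add] at hp
  obtain rfl : z = 0 :=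
    Submodule.disjoint_def.1 Stmt5.disjoint_ker_phi_restrictSupport z hz_ker hz
  rw [add_zero]
  exact hy

/-- Lemma 5.8 (Claim:onX), elimination computation: the kernel of `φ` is the ideal generated
by the five quadrics `ce − df`, `d² − ae`, `cd − af`, `bd − e² + f²`, `ab − de + cf`
(where `a,b,c,d,e,f` denote the six variables). -/
theorem stmt5 (k : Type*) [Field k] [CharZero k] :
    RingHom.ker (Stmt5.phi k).toRingHom =
      Ideal.span {X 2 * X 4 - X 3 * X 5,
        X 3 ^ 2 - X 0 * X 4,
        X 2 * X 3 - X 0 * X 5,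
        X 1 * X 3 - X 4 ^ 2 + X 5 ^ 2,
        X 0 * X 1 - X 3 * X 4 + X 2 * X 5} :=
  stmt5_general k
end

section
/- Let k = ℂ and consider the polynomial ring ℂ[x, s]. For scalars a₁, a₂, a₃, a₄, a₅, a₆, a₇, a₈ ∈ ℂ, the pair of polynomials (a₁ + a₂x + a₃xs + a₇x² + a₈x²s, a₄ + a₅x + a₆xs + a₇x²s + a₈x²s²) lies in the image of the ℂ[x,s]-linear map M₀ : ℂ[x,s]² → ℂ[x,s]², (u, w) ↦ (u, s·u + x·w), if and only if a₁ = 0 and a₄ = 0. -/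
open MvPolynomial

/-- Case 5.2 of the proof of Theorem 5.10 (T:DD): in `ℂ[x,s]` (with `x = X 0`, `s = X 1`),
the pair `(a₁ + a₂x + a₃xs + a₇x² + a₈x²s, a₄ + a₅x + a₆xs + a₇x²s + a₈x²s²)` lies in the
image of the map `M₀ : (u, w) ↦ (u, s·u + x·w)` iff `a₁ = 0` and `a₄ = 0`. -/
theorem stmt8 (a₁ a₂ a₃ a₄ a₅ a₆ a₇ a₈ : ℂ) :
    (∃ u w : MvPolynomial (Fin 2) ℂ,
        C a₁ + C a₂ * X 0 + C a₃ * X 0 * X 1 + C a₇ * X 0 ^ 2 + C a₈ * X 0 ^ 2 * X 1 = u ∧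
        C a₄ + C a₅ * X 0 + C a₆ * X 0 * X 1 + C a₇ * X 0 ^ 2 * X 1 +
            C a₈ * X 0 ^ 2 * X 1 ^ 2 = X 1 * u + X 0 * w) ↔
      (a₁ = 0 ∧ a₄ = 0) := by
  constructor
  · rintro ⟨u, w, h1, h2⟩
    have e0 := congrArg (eval (![0, 0] : Fin 2 → ℂ)) h2
    have e1 := congrArg (eval (![0, 1] : Fin 2 → ℂ)) h1
    have e2 := congrArg (eval (![0, 1] : Fin 2 → ℂ)) h2
    simp at e0 e1 e2
    constructor
    · rw [e1, ← e2, e0]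
    · exact e0
  · rintro ⟨rfl, rfl⟩
    refine ⟨C a₂ * X 0 + C a₃ * X 0 * X 1 + C a₇ * X 0 ^ 2 + C a₈ * X 0 ^ 2 * X 1,
      C a₅ + C (a₆ - a₂) * X 1 - C a₃ * X 1 ^ 2, by rw [map_zero]; ring, ?_⟩
    simp only [map_sub, map_zero]
    ring
end
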